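/- arXiv:2509.05968 — 4 statements merged into one kernel-verified Lean document; each statement's English description precedes it below -/
import Mathlib

section
/- Let Q, k, c′, r be positive integers with gcd(c′, Q) = 1, let χ be a Dirichlet character modulo Q, and set c = Q^k · c′. Then ∑_{d ∈ (ℤ/cℤ)^×} χ(d)·e(d·r/c) = χ(c′) · ( ∑_{d ∈ (ℤ/Q^k ℤ)^×} χ(d)·e(d·r/Q^k) ) · ( ∑_{d | gcd(c′, r)} μ(c′/d)·d ), where in each character sum χ(d) denotes χ evaluated at the reduction of d modulo Q, and the last sum runs over the positive divisors d of gcd(c′, r). -/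
/-!
By the Chinese remainder theorem, every unit modulo `Q ^ k * c'` can be written uniquely as
`a * c' + b * Q ^ k` with `a` a unit modulo `Q ^ k` and `b` a unit modulo `c'`. For such a `d`
we have `χ d = χ c' * χ a` since `Q ∣ Q ^ k`, and `e(d r / c) = e(a r / Q ^ k) * e(b r / c')`.
So the sum splits into `χ c'`, the sum modulo `Q ^ k`, and the Ramanujan sum
`c_{c'}(r) = ∑_{b ∈ (ℤ/c'ℤ)ˣ} e(b r / c')`. Detecting coprimality with the Möbius function gives
`c_n(r) = ∑_{e ∣ n} μ(e) ∑_{j < n, e ∣ j} e(j r / n) = ∑_{e ∣ n, (n / e) ∣ r} μ(e) (n / e)`.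
-/

open Complex Finset ArithmeticFunction
open scoped ArithmeticFunction.Moebius

namespace ZMod

lemma stdAddChar_natCast {N : ℕ} [NeZero N] (j : ℕ) :
    stdAddChar (j : ZMod N) = exp (2 * Real.pi * I * j / N) := by
  simpa using stdAddChar_coe (N := N) j

lemma stdAddChar_natCast_mul_of_eq {N m n : ℕ} [NeZero N] [NeZero m] (h : N = m * n) (j : ℕ) :
    stdAddChar ((j * n : ℕ) : ZMod N) = stdAddChar (j : ZMod m) := by
  have hn : (n : ℂ) ≠ 0 := fun hn => NeZero.ne N (by simp_all)
  have hm : (m : ℂ) ≠ 0 := Nat.cast_ne_zero.mpr (NeZero.ne m)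
  rw [stdAddChar_natCast, stdAddChar_natCast, h]
  congr 1
  push_cast
  field_simp

lemma exp_val_mul_div_eq_stdAddChar {N : ℕ} [NeZero N] (x : ZMod N) (r : ℕ) :
    exp (2 * Real.pi * I * (((x.val : ℝ) * r / N : ℝ) : ℂ)) = stdAddChar (x * (r : ZMod N)) := by
  rw [show x * (r : ZMod N) = ((x.val * r : ℕ) : ZMod N) by push_cast [natCast_zmod_val]; rfl,
    stdAddChar_natCast]
  push_cast
  ring_nf

lemma sum_range_stdAddChar_natCast_mul (q r : ℕ) [NeZero q] :
    ∑ t ∈ range q, stdAddChar ((t * r : ℕ) : ZMod q) = if q ∣ r then (q : ℂ) else 0 := by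
  obtain ⟨k, rfl⟩ : ∃ k, q = k + 1 := Nat.exists_eq_succ_of_ne_zero (NeZero.ne q)
  rw [← Fin.sum_univ_eq_sum_range (fun t => stdAddChar ((t * r : ℕ) : ZMod (k + 1)))]
  have hsum := AddChar.sum_mulShift (r : ZMod (k + 1)) (isPrimitive_stdAddChar (k + 1))
  simp only [card, natCast_eq_zero_iff, Nat.cast_ite, Nat.cast_zero] at hsum
  rw [← hsum]
  refine Fintype.sum_congr _ _ fun x => ?_
  rw [Nat.cast_mul]
  exact congrArg _ (congrArg (· * _) (natCast_zmod_val (n := k + 1) x))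

lemma sum_units_eq_sum_range_coprime {M : Type*} [AddCommMonoid M] (n : ℕ) [NeZero n]
    (f : ℕ → M) : ∑ d : (ZMod n)ˣ, f (d : ZMod n).val = ∑ j ∈ range n with j.Coprime n, f j := by
  refine sum_bij (fun d _ => (d : ZMod n).val) ?_ ?_ ?_ fun _ _ => rfl
  · intro d _
    simpa only [mem_filter, mem_range] using ⟨val_lt _, val_coe_unit_coprime d⟩
  · intro d₁ _ d₂ _ h
    exact Units.ext (val_injective n h)
  · intro j hj
    simp only [mem_filter, mem_range] at hj
    refine ⟨unitOfCoprime j hj.2, mem_univ _, ?_⟩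
    rw [coe_unitOfCoprime, val_natCast, Nat.mod_eq_of_lt hj.1]

lemma chineseRemainder_natCast {m n : ℕ} (h : m.Coprime n) (j : ℕ) :
    chineseRemainder h j = ((j : ZMod m), (j : ZMod n)) := by
  rw [map_natCast]
  rfl

/-- The Chinese remainder isomorphism on units, twisted by `(n, m)` so that `(a, b)` is sent to
`a * n + b * m`. -/
noncomputable def unitsProdEquivOfCoprime {m n : ℕ} (h : m.Coprime n) :
    (ZMod m)ˣ × (ZMod n)ˣ ≃ (ZMod (m * n))ˣ :=
  (Equiv.mulRight (unitOfCoprime n h.symm, unitOfCoprime m h)).trans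
    ((Units.mapEquiv (chineseRemainder h).toMulEquiv).trans MulEquiv.prodUnits).symm.toEquiv

lemma coe_unitsProdEquivOfCoprime_apply {m n : ℕ} [NeZero m] [NeZero n] (h : m.Coprime n)
    (p : (ZMod m)ˣ × (ZMod n)ˣ) :
    (unitsProdEquivOfCoprime h p : ZMod (m * n))
      = (((p.1 : ZMod m).val * n + (p.2 : ZMod n).val * m : ℕ) : ZMod (m * n)) := by
  have hp := ((Units.mapEquiv (chineseRemainder h).toMulEquiv).trans
    MulEquiv.prodUnits).apply_symm_apply (p * (unitOfCoprime n h.symm, unitOfCoprime m h))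
  apply (chineseRemainder h).injective
  rw [chineseRemainder_natCast]
  ext
  · refine (congrArg (fun q => ((q.1 : (ZMod m)ˣ) : ZMod m)) hp).trans ?_
    simp
  · refine (congrArg (fun q => ((q.2 : (ZMod n)ˣ) : ZMod n)) hp).trans ?_
    simp

end ZMod

lemma Nat.filter_dvd_divisors_eq_divisors_gcd {n : ℕ} (hn : n ≠ 0) (j : ℕ) :
    {e ∈ n.divisors | e ∣ j} = (n.gcd j).divisors := by
  ext e
  simp [Nat.dvd_gcd_iff, hn, Nat.gcd_eq_zero_iff]

lemma Finset.sum_range_filter_dvd {M : Type*} [AddCommMonoid M] {e n : ℕ} (he : e ∣ n)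
    (f : ℕ → M) : ∑ j ∈ range n with e ∣ j, f j = ∑ t ∈ range (n / e), f (t * e) := by
  rcases Nat.eq_zero_or_pos e with rfl | he0
  · obtain rfl := Nat.eq_zero_of_zero_dvd he
    simp
  refine (sum_nbij' (· * e) (· / e) ?_ ?_ ?_ ?_ fun _ _ => rfl).symm
  · intro t ht
    simp only [mem_filter, mem_range] at ht ⊢
    exact ⟨mul_comm t e ▸ (Nat.lt_div_iff_mul_lt' he t).mp ht, dvd_mul_left e t⟩
  · intro j hj
    simp only [mem_filter, mem_range] at hj ⊢
    exact Nat.div_lt_div_of_lt_of_dvd he hj.1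
  · intro t _
    exact Nat.mul_div_cancel t he0
  · intro j hj
    exact Nat.div_mul_cancel (mem_filter.mp hj).2

lemma ArithmeticFunction.sum_divisors_moebius_eq_ite {R : Type*} [Ring R] (m : ℕ) :
    ∑ e ∈ m.divisors, (μ e : R) = if m = 1 then 1 else 0 := by
  have h := congrArg (fun f : ArithmeticFunction R => f m) (coe_moebius_mul_coe_zeta (R := R))
  simp only [coe_mul_zeta_apply, one_apply] at h
  exact h

noncomputable def ramanujanSum (n r : ℕ) [NeZero n] : ℂ :=
  ∑ d : (ZMod n)ˣ, ZMod.stdAddChar ((d : ZMod n) * (r : ZMod n))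

theorem ramanujanSum_eq (n r : ℕ) [NeZero n] :
    ramanujanSum n r = ∑ e ∈ (n.gcd r).divisors, (μ (n / e) : ℂ) * e := by
  have hn := NeZero.ne n
  calc ramanujanSum n r
      = ∑ j ∈ range n with j.Coprime n, ZMod.stdAddChar ((j * r : ℕ) : ZMod n) := by
        rw [ramanujanSum, ← ZMod.sum_units_eq_sum_range_coprime]
        simp only [Nat.cast_mul, ZMod.natCast_zmod_val]
    _ = ∑ j ∈ range n, ∑ e ∈ n.divisors with e ∣ j,
          (μ e : ℂ) * ZMod.stdAddChar ((j * r : ℕ) : ZMod n) := by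
        rw [sum_filter]
        refine sum_congr rfl fun j _ => ?_
        rw [← sum_mul, Nat.filter_dvd_divisors_eq_divisors_gcd hn, sum_divisors_moebius_eq_ite,
          Nat.gcd_comm, ite_mul, one_mul, zero_mul]
    _ = ∑ e ∈ n.divisors, (μ e : ℂ) *
          ∑ j ∈ range n with e ∣ j, ZMod.stdAddChar ((j * r : ℕ) : ZMod n) := by
        simp only [mul_sum]
        exact sum_comm' fun j e => by simp only [mem_filter, mem_range]; tauto
    _ = ∑ e ∈ n.divisors, (μ e : ℂ) * (if n / e ∣ r then ((n / e : ℕ) : ℂ) else 0) := by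
        refine sum_congr rfl fun e he => ?_
        have he := Nat.dvd_of_mem_divisors he
        have : NeZero (n / e) := ⟨fun h => hn (by rw [← Nat.div_mul_cancel he, h, zero_mul])⟩
        rw [sum_range_filter_dvd he, ← ZMod.sum_range_stdAddChar_natCast_mul]
        congr 1
        refine sum_congr rfl fun t _ => ?_
        rw [mul_right_comm, ← ZMod.stdAddChar_natCast_mul_of_eq (Nat.div_mul_cancel he).symm]
    _ = ∑ e ∈ n.divisors, (μ (n / e) : ℂ) * (if e ∣ r then (e : ℂ) else 0) := by
        rw [← Nat.sum_div_divisors]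
        refine sum_congr rfl fun e he => ?_
        rw [Nat.div_div_self (Nat.dvd_of_mem_divisors he) hn]
    _ = ∑ e ∈ (n.gcd r).divisors, (μ (n / e) : ℂ) * e := by
        rw [← Nat.filter_dvd_divisors_eq_divisors_gcd hn, sum_filter]
        refine sum_congr rfl fun e _ => ?_
        split_ifs <;> simp

theorem sum_units_dirichletCharacter_mul_stdAddChar_of_coprime {Q m n : ℕ} [NeZero m]
    [NeZero n] (hQm : Q ∣ m) (hmn : m.Coprime n) (χ : DirichletCharacter ℂ Q) (r : ℕ) :
    ∑ d : (ZMod (m * n))ˣ, χ (ZMod.castHom (hQm.mul_right n) (ZMod Q) d) *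
        ZMod.stdAddChar ((d : ZMod (m * n)) * (r : ZMod (m * n)))
      = χ n * (∑ a : (ZMod m)ˣ, χ (ZMod.castHom hQm (ZMod Q) a) *
          ZMod.stdAddChar ((a : ZMod m) * (r : ZMod m))) * ramanujanSum n r := by
  rw [← (ZMod.unitsProdEquivOfCoprime hmn).sum_comp, Fintype.sum_prod_type, ramanujanSum,
    mul_assoc, sum_mul_sum, mul_sum]
  refine sum_congr rfl fun a _ => ?_
  rw [mul_sum]
  refine sum_congr rfl fun b _ => ?_
  have hchar : ZMod.castHom (hQm.mul_right n) (ZMod Q) (ZMod.unitsProdEquivOfCoprime hmn (a, b))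
      = ZMod.castHom hQm (ZMod Q) a * n := by
    conv_rhs => rw [← ZMod.natCast_zmod_val (a : ZMod m), map_natCast]
    rw [ZMod.coe_unitsProdEquivOfCoprime_apply, map_natCast, Nat.cast_add, Nat.cast_mul,
      Nat.cast_mul, (ZMod.natCast_eq_zero_iff m Q).mpr hQm, mul_zero, add_zero]
  have hexp : ZMod.stdAddChar
        ((ZMod.unitsProdEquivOfCoprime hmn (a, b) : ZMod (m * n)) * (r : ZMod (m * n)))
      = ZMod.stdAddChar ((a : ZMod m) * (r : ZMod m)) *
          ZMod.stdAddChar ((b : ZMod n) * (r : ZMod n)) := by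
    rw [ZMod.coe_unitsProdEquivOfCoprime_apply, ← Nat.cast_mul, add_mul, mul_right_comm,
      mul_right_comm _ m, Nat.cast_add, AddChar.map_add_eq_mul,
      ZMod.stdAddChar_natCast_mul_of_eq rfl, ZMod.stdAddChar_natCast_mul_of_eq (mul_comm m n)]
    simp only [Nat.cast_mul, ZMod.natCast_zmod_val]
  rw [hchar, hexp, map_mul]
  ring

/-- Factorization of the twisted character/Ramanujan sum
∑_{d ∈ (ℤ/cℤ)^×} χ(d)·e(d·r/c) for c = Q^k·c′ with (c′, Q) = 1
(Section 5 of the paper). -/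
theorem stmt5 (Q k c' r : ℕ) (hk : 0 < k) (hc' : 0 < c')
    (hcop : Nat.Coprime c' Q) (χ : DirichletCharacter ℂ Q)
    (c : ℕ) [NeZero c] [NeZero (Q ^ k)] (hc : c = Q ^ k * c') :
    ∑ d : (ZMod c)ˣ,
        χ (ZMod.castHom (show Q ∣ c by
              rw [hc]; exact Dvd.dvd.mul_right (dvd_pow_self Q hk.ne') c') (ZMod Q)
            (d : ZMod c)) *
          Complex.exp (2 * Real.pi * Complex.I *
            ((((d : ZMod c).val : ℝ) * r / c : ℝ) : ℂ)) =
      χ (c' : ZMod Q) *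
        (∑ d : (ZMod (Q ^ k))ˣ,
            χ (ZMod.castHom (dvd_pow_self Q hk.ne') (ZMod Q) (d : ZMod (Q ^ k))) *
              Complex.exp (2 * Real.pi * Complex.I *
                ((((d : ZMod (Q ^ k)).val : ℝ) * r / (Q ^ k) : ℝ) : ℂ))) *
        ∑ d ∈ (Nat.gcd c' r).divisors,
          ((ArithmeticFunction.moebius (c' / d) : ℤ) : ℂ) * (d : ℂ) := by
  subst hc
  have : NeZero c' := ⟨hc'.ne'⟩
  simp only [← Nat.cast_pow, ZMod.exp_val_mul_div_eq_stdAddChar]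
  rw [sum_units_dirichletCharacter_mul_stdAddChar_of_coprime (dvd_pow_self Q hk.ne')
    (hcop.symm.pow_left k), ramanujanSum_eq]
end

section
/- Let α : ℕ × ℕ → ℂ satisfy α(0, m) = 1 for all m ≥ 0 and |α(ℓ, m)| ≤ 2^{−ℓ} for all ℓ ≥ 1 and all m ≥ 0. Define β : ℕ → ℂ by β(0) = 1 and β(ℓ) = −∑_{ℓ₁=0}^{ℓ−1} β(ℓ₁)·α(ℓ − ℓ₁, ℓ₁) for ℓ ≥ 1. Then for every natural number A and every complex number w with |w| ≤ 1, one has | ∑_{ℓ₁=0}^{A} β(ℓ₁)·( ∑_{ℓ₂=0}^{A} α(ℓ₂, ℓ₁)·w^{ℓ₂} )·w^{ℓ₁} − 1 | ≤ 4·|w|^{A+1}. -/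
/-!
Put `g ℓ₁ ℓ₂ = β ℓ₁ α ℓ₂ ℓ₁ w^(ℓ₁+ℓ₂)`, so that the sum in question is the sum of `g` over the
square `[0, A]²`. Summed along an antidiagonal `ℓ₁ + ℓ₂ = n`, `g` gives `w^n` times the
coefficient that the recursion for `β` makes vanish for `n ≥ 1`, so the triangle `ℓ₁ + ℓ₂ ≤ A`
contributes exactly `1`. The recursion also gives `‖β ℓ‖ ≤ ∑_{k ≥ 1} 2^{-k} = 1`, so every
remaining term, where `ℓ₁ + ℓ₂ > A` and hence `ℓ₂ ≥ 1`, has norm at most `2^{-ℓ₂} ‖w‖^(A+1)`,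
and these geometric weights add up to at most `2`.
-/

open Finset

lemma sum_range_inv_two_pow_sub_le_one (n : ℕ) : ∑ k ∈ range n, ((2 : ℝ) ^ (n - k))⁻¹ ≤ 1 := by
  rw [← sum_range_reflect]
  calc ∑ j ∈ range n, ((2 : ℝ) ^ (n - (n - 1 - j)))⁻¹
      = 2⁻¹ * ∑ j ∈ range n, (2⁻¹ : ℝ) ^ j := by
        rw [mul_sum]
        refine sum_congr rfl fun j hj => ?_
        rw [show n - (n - 1 - j) = j + 1 by have := mem_range.mp hj; omega, ← inv_pow, pow_succ']
    _ ≤ 2⁻¹ * 2 := by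
        gcongr
        simpa only [one_div] using sum_geometric_two_le n
    _ = 1 := by norm_num

lemma sum_range_sum_Ico_inv_two_pow_le_two (n : ℕ) :
    ∑ i ∈ range (n + 1), ∑ j ∈ Ico (n + 1 - i) (n + 1), ((2 : ℝ) ^ j)⁻¹ ≤ 2 := by
  calc ∑ i ∈ range (n + 1), ∑ j ∈ Ico (n + 1 - i) (n + 1), ((2 : ℝ) ^ j)⁻¹
      ≤ ∑ i ∈ range (n + 1), 2 * ((2 : ℝ) ^ (n + 1 - i))⁻¹ := by
        refine sum_le_sum fun i _ => ?_
        simp only [← inv_pow]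
        calc ∑ j ∈ Ico (n + 1 - i) (n + 1), (2⁻¹ : ℝ) ^ j
            ≤ (2⁻¹ : ℝ) ^ (n + 1 - i) / (1 - 2⁻¹) :=
              geom_sum_Ico_le_of_lt_one (by norm_num) (by norm_num)
          _ = 2 * (2⁻¹ : ℝ) ^ (n + 1 - i) := by ring
    _ = 2 * ∑ i ∈ range (n + 1), ((2 : ℝ) ^ (n + 1 - i))⁻¹ := (mul_sum _ _ _).symm
    _ ≤ 2 * 1 := by grw [sum_range_inv_two_pow_sub_le_one]
    _ = 2 := mul_one 2

section

variable {R : Type*}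

lemma sum_range_succ_mul_sub_eq_ite [CommRing R] {α : ℕ → ℕ → R} {β : ℕ → R}
    (hα0 : ∀ m, α 0 m = 1) (hβ0 : β 0 = 1)
    (hβ : ∀ ℓ : ℕ, 1 ≤ ℓ → β ℓ = -∑ ℓ₁ ∈ range ℓ, β ℓ₁ * α (ℓ - ℓ₁) ℓ₁) (n : ℕ) :
    ∑ ℓ₁ ∈ range (n + 1), β ℓ₁ * α (n - ℓ₁) ℓ₁ = if n = 0 then 1 else 0 := by
  rcases Nat.eq_zero_or_pos n with rfl | hn
  · simp [hα0, hβ0]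
  · rw [sum_range_succ, Nat.sub_self, hα0, hβ n hn, if_neg hn.ne']
    ring

lemma sum_triangle_eq_one [CommRing R] {α : ℕ → ℕ → R} {β : ℕ → R}
    (hα0 : ∀ m, α 0 m = 1) (hβ0 : β 0 = 1)
    (hβ : ∀ ℓ : ℕ, 1 ≤ ℓ → β ℓ = -∑ ℓ₁ ∈ range ℓ, β ℓ₁ * α (ℓ - ℓ₁) ℓ₁) (n : ℕ) (w : R) :
    ∑ ℓ₁ ∈ range (n + 1), ∑ ℓ₂ ∈ range (n + 1 - ℓ₁), β ℓ₁ * α ℓ₂ ℓ₁ * w ^ (ℓ₁ + ℓ₂) = 1 := by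
  rw [← sum_range_diag_flip]
  calc ∑ m ∈ range (n + 1), ∑ k ∈ range (m + 1), β k * α (m - k) k * w ^ (k + (m - k))
      = ∑ m ∈ range (n + 1), w ^ m * ∑ k ∈ range (m + 1), β k * α (m - k) k := by
        refine sum_congr rfl fun m _ => ?_
        rw [mul_sum]
        refine sum_congr rfl fun k hk => ?_
        rw [Nat.add_sub_cancel' (Nat.lt_succ_iff.mp (mem_range.mp hk))]
        ring
    _ = 1 := by simp [sum_range_succ_mul_sub_eq_ite hα0 hβ0 hβ]

variable [NormedCommRing R] [NormOneClass R]

lemma norm_le_one_of_eq_neg_sum {α : ℕ → ℕ → R} {β : ℕ → R}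
    (hα : ∀ ℓ m : ℕ, 1 ≤ ℓ → ‖α ℓ m‖ ≤ ((2 : ℝ) ^ ℓ)⁻¹) (hβ0 : β 0 = 1)
    (hβ : ∀ ℓ : ℕ, 1 ≤ ℓ → β ℓ = -∑ ℓ₁ ∈ range ℓ, β ℓ₁ * α (ℓ - ℓ₁) ℓ₁) (ℓ : ℕ) :
    ‖β ℓ‖ ≤ 1 := by
  induction ℓ using Nat.strong_induction_on with
  | _ ℓ ih =>
    rcases Nat.eq_zero_or_pos ℓ with rfl | hℓ
    · simp [hβ0]
    rw [hβ ℓ hℓ, norm_neg]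
    calc ‖∑ ℓ₁ ∈ range ℓ, β ℓ₁ * α (ℓ - ℓ₁) ℓ₁‖
        ≤ ∑ ℓ₁ ∈ range ℓ, ‖β ℓ₁‖ * ‖α (ℓ - ℓ₁) ℓ₁‖ :=
          (norm_sum_le _ _).trans (sum_le_sum fun _ _ => norm_mul_le _ _)
      _ ≤ ∑ ℓ₁ ∈ range ℓ, 1 * ((2 : ℝ) ^ (ℓ - ℓ₁))⁻¹ := by
          refine sum_le_sum fun i hi => ?_
          have hi := mem_range.mp hi
          gcongr
          exacts [ih i hi, hα _ _ (by omega)]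
      _ ≤ 1 := by simpa only [one_mul] using sum_range_inv_two_pow_sub_le_one ℓ

lemma norm_sum_off_triangle_le {α : ℕ → ℕ → R} {β : ℕ → R}
    (hα : ∀ ℓ m : ℕ, 1 ≤ ℓ → ‖α ℓ m‖ ≤ ((2 : ℝ) ^ ℓ)⁻¹) (hβ : ∀ ℓ, ‖β ℓ‖ ≤ 1)
    (n : ℕ) {w : R} (hw : ‖w‖ ≤ 1) :
    ‖∑ ℓ₁ ∈ range (n + 1), ∑ ℓ₂ ∈ Ico (n + 1 - ℓ₁) (n + 1), β ℓ₁ * α ℓ₂ ℓ₁ * w ^ (ℓ₁ + ℓ₂)‖ ≤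
      2 * ‖w‖ ^ (n + 1) := by
  have hterm : ∀ ℓ₁ ∈ range (n + 1), ∀ ℓ₂ ∈ Ico (n + 1 - ℓ₁) (n + 1),
      ‖β ℓ₁ * α ℓ₂ ℓ₁ * w ^ (ℓ₁ + ℓ₂)‖ ≤ ((2 : ℝ) ^ ℓ₂)⁻¹ * ‖w‖ ^ (n + 1) := by
    intro ℓ₁ h₁ ℓ₂ h₂
    have h₁ := mem_range.mp h₁
    have h₂ := mem_Ico.mp h₂
    calc ‖β ℓ₁ * α ℓ₂ ℓ₁ * w ^ (ℓ₁ + ℓ₂)‖ ≤ ‖β ℓ₁‖ * ‖α ℓ₂ ℓ₁‖ * ‖w‖ ^ (ℓ₁ + ℓ₂) :=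
          (norm_mul_le _ _).trans (by gcongr; exacts [norm_mul_le _ _, norm_pow_le _ _])
      _ ≤ 1 * ((2 : ℝ) ^ ℓ₂)⁻¹ * ‖w‖ ^ (n + 1) := by
          gcongr ?_ * ?_ * ?_
          · exact hβ ℓ₁
          · exact hα _ _ (by omega)
          · exact pow_le_pow_of_le_one (norm_nonneg w) hw (by omega)
      _ = ((2 : ℝ) ^ ℓ₂)⁻¹ * ‖w‖ ^ (n + 1) := by rw [one_mul]
  calc _ ≤ ∑ ℓ₁ ∈ range (n + 1), ∑ ℓ₂ ∈ Ico (n + 1 - ℓ₁) (n + 1),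
          ((2 : ℝ) ^ ℓ₂)⁻¹ * ‖w‖ ^ (n + 1) :=
        (norm_sum_le _ _).trans <| sum_le_sum fun ℓ₁ h₁ =>
          (norm_sum_le _ _).trans <| sum_le_sum fun ℓ₂ h₂ => hterm ℓ₁ h₁ ℓ₂ h₂
    _ = (∑ ℓ₁ ∈ range (n + 1), ∑ ℓ₂ ∈ Ico (n + 1 - ℓ₁) (n + 1), ((2 : ℝ) ^ ℓ₂)⁻¹) *
          ‖w‖ ^ (n + 1) := by simp only [sum_mul]
    _ ≤ 2 * ‖w‖ ^ (n + 1) := by grw [sum_range_sum_Ico_inv_two_pow_le_two]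

end

/-- Approximation of the constant function 1 by a finite combination of
hypergeometric series (Section 4.2 of the paper). -/
theorem stmt8 (α : ℕ → ℕ → ℂ) (hα0 : ∀ m : ℕ, α 0 m = 1)
    (hα : ∀ ℓ m : ℕ, 1 ≤ ℓ → ‖α ℓ m‖ ≤ ((2 : ℝ) ^ ℓ)⁻¹)
    (β : ℕ → ℂ) (hβ0 : β 0 = 1)
    (hβ : ∀ ℓ : ℕ, 1 ≤ ℓ → β ℓ = -∑ ℓ₁ ∈ Finset.range ℓ, β ℓ₁ * α (ℓ - ℓ₁) ℓ₁)
    (A : ℕ) (w : ℂ) (hw : ‖w‖ ≤ 1) :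
    ‖(∑ ℓ₁ ∈ Finset.range (A + 1),
        β ℓ₁ * (∑ ℓ₂ ∈ Finset.range (A + 1), α ℓ₂ ℓ₁ * w ^ ℓ₂) * w ^ ℓ₁) - 1‖ ≤
      4 * ‖w‖ ^ (A + 1) := by
  have hsquare : ∑ ℓ₁ ∈ range (A + 1), β ℓ₁ * (∑ ℓ₂ ∈ range (A + 1), α ℓ₂ ℓ₁ * w ^ ℓ₂) * w ^ ℓ₁ =
      ∑ ℓ₁ ∈ range (A + 1), (∑ ℓ₂ ∈ range (A + 1 - ℓ₁), β ℓ₁ * α ℓ₂ ℓ₁ * w ^ (ℓ₁ + ℓ₂) +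
        ∑ ℓ₂ ∈ Ico (A + 1 - ℓ₁) (A + 1), β ℓ₁ * α ℓ₂ ℓ₁ * w ^ (ℓ₁ + ℓ₂)) := by
    refine sum_congr rfl fun ℓ₁ _ => ?_
    rw [sum_range_add_sum_Ico _ (Nat.sub_le _ _), mul_sum, sum_mul]
    exact sum_congr rfl fun ℓ₂ _ => by ring
  rw [hsquare, sum_add_distrib, sum_triangle_eq_one hα0 hβ0 hβ, add_sub_cancel_left]
  calc _ ≤ 2 * ‖w‖ ^ (A + 1) :=
        norm_sum_off_triangle_le hα (norm_le_one_of_eq_neg_sum hα hβ0 hβ) A hw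
    _ ≤ 4 * ‖w‖ ^ (A + 1) := by gcongr; norm_num
end

section
/- For every real a ≥ 1 there exists a constant C = C(a) > 0 such that for all real u with |u| ≤ a and all real v, μ with |v + μ| ≥ 1 and |v − μ| ≥ 1, setting s = u + iv, one has |Γ((s − 1/2 + iμ)/2)| · |Γ((s − 1/2 − iμ)/2)| · cosh(πμ/2) ≤ C · e^{−(π/2)·max(|v| − |μ|, 0)} · (1 + |μ + v|)^{u/2 − 3/4} · (1 + |μ − v|)^{u/2 − 3/4}. -/
/-!
By Stirling, `Γ(z) z ^ (1/2 - z)` stays bounded on vertical strips; on `1/2 ≤ re z ≤ 3/2` it is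
at most `√(2π)`. On the line `re z = 1/2` this is the reflection formula
`|Γ(1/2 + iy)|² = π / cosh(πy)`, the line `re z = 3/2` reduces to it through `Γ(z + 1) = z Γ(z)`,
and Phragmén–Lindelöf interpolates, the integral `|Γ(z)| ≤ Γ(re z)` supplying the a priori
growth bound. Since `|z ^ (1/2 - z)| = |z| ^ (1/2 - x) e ^ (y arg z)` with
`y arg z ≥ π (|y| - x) / 2`, this gives `|Γ(x + iy)| ≪ e ^ (-π|y|/2) (1 + |y|) ^ (x - 1/2)` in
the strip, and the functional equation extends it to `|x| ≤ R`, `|y| ≥ 1/2`. Both factors of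
`B(s, μ)` have `x = (u - 1/2)/2` and `y = (v ± μ)/2`; the factor `cosh(πμ/2) ≤ e ^ (π|μ|/2)` is
absorbed using `|v + μ| + |v - μ| = 2 max(|v|, |μ|)`.
-/

open Complex ComplexConjugate
open scoped Real

theorem Real.cosh_le_exp_abs (x : ℝ) : Real.cosh x ≤ Real.exp |x| := by
  rw [Real.cosh_eq]
  linarith [Real.exp_le_exp.mpr (le_abs_self x), Real.exp_le_exp.mpr (neg_le_abs x)]

theorem abs_add_add_abs_sub (a b : ℝ) : |a + b| + |a - b| = 2 * max |a| |b| := by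
  grind

namespace Complex

theorem norm_Gamma_le_Gamma_re {z : ℂ} (hz : 0 < z.re) : ‖Gamma z‖ ≤ Real.Gamma z.re := by
  rw [Gamma_eq_integral hz, Real.Gamma_eq_integral hz]
  refine (MeasureTheory.norm_integral_le_integral_norm _).trans_eq <|
    MeasureTheory.setIntegral_congr_fun measurableSet_Ioi fun t (ht : 0 < t) ↦ ?_
  simp [norm_cpow_eq_rpow_re_of_pos ht, norm_exp]

theorem norm_Gamma_le_of_re_mem_Icc {z : ℂ} (h₁ : 1 / 2 ≤ z.re) (h₂ : z.re ≤ 3 / 2) :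
    ‖Gamma z‖ ≤ max (Real.Gamma (1 / 2)) (Real.Gamma (3 / 2)) :=
  (norm_Gamma_le_Gamma_re (by linarith)).trans <|
    Real.convexOn_Gamma.le_on_segment (by norm_num) (by norm_num)
      (Icc_subset_segment ⟨h₁, h₂⟩)

theorem norm_Gamma_one_half_add_mul_I_sq (y : ℝ) :
    ‖Gamma (1 / 2 + y * I)‖ ^ 2 = π / Real.cosh (π * y) := by
  have hconj : 1 - (1 / 2 + y * I) = conj (1 / 2 + y * I) := by
    apply Complex.ext <;> simp; norm_num
  have hsin : sin (π * (1 / 2 + y * I)) = Real.cosh (π * y) := by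
    rw [show (π : ℂ) * (1 / 2 + y * I) = ↑(π * y) * I + ↑π / 2 by push_cast; ring,
      sin_add_pi_div_two, cos_mul_I, ofReal_cosh]
  have := congrArg norm (Gamma_mul_Gamma_one_sub (1 / 2 + y * I))
  rwa [hconj, Gamma_conj, norm_mul, RCLike.norm_conj, ← sq, hsin, norm_div, norm_real, norm_real,
    Real.norm_of_nonneg Real.pi_pos.le, Real.norm_of_nonneg (Real.cosh_pos _).le] at this

theorem norm_Gamma_one_half_add_mul_I_le (y : ℝ) :
    ‖Gamma (1 / 2 + y * I)‖ ≤ √(2 * π) * Real.exp (-(π / 2) * |y|) := by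
  have hcosh : Real.exp (π * |y|) ≤ 2 * Real.cosh (π * y) := by
    rw [← Real.cosh_abs, abs_mul, abs_of_pos Real.pi_pos, Real.cosh_eq]
    linarith [Real.exp_pos (-(π * |y|))]
  rw [← pow_le_pow_iff_left₀ (norm_nonneg _) (by positivity) two_ne_zero,
    norm_Gamma_one_half_add_mul_I_sq, mul_pow, Real.sq_sqrt (by positivity), ← Real.exp_nat_mul,
    div_le_iff₀ (Real.cosh_pos _), show (2 : ℕ) * (-(π / 2) * |y|) = -(π * |y|) by push_cast; ring]
  calc π = π * (Real.exp (-(π * |y|)) * Real.exp (π * |y|)) := by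
        rw [← Real.exp_add, neg_add_cancel, Real.exp_zero, mul_one]
    _ ≤ π * (Real.exp (-(π * |y|)) * (2 * Real.cosh (π * y))) := by gcongr
    _ = _ := by ring

theorem im_mul_arg_eq_abs_mul_abs (z : ℂ) : z.im * arg z = |z.im| * |arg z| := by
  rcases le_or_gt 0 z.im with h | h
  · rw [abs_of_nonneg h, abs_of_nonneg (arg_nonneg_iff.mpr h)]
  · rw [abs_of_neg h, abs_of_neg (arg_neg_iff.mpr h), neg_mul_neg]

theorem im_mul_arg_le {z : ℂ} (hz : 0 ≤ z.re) : z.im * arg z ≤ π / 2 * |z.im| := by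
  rw [im_mul_arg_eq_abs_mul_abs, mul_comm]
  exact mul_le_mul_of_nonneg_right (abs_arg_le_pi_div_two_iff.mpr hz) (abs_nonneg _)

theorem le_im_mul_arg {z : ℂ} (hz : 0 < z.re) :
    π / 2 * (|z.im| - z.re) ≤ z.im * arg z := by
  have hz0 : z ≠ 0 := fun h ↦ by simp [h] at hz
  have hnorm : 0 < ‖z‖ := norm_pos_iff.mpr hz0
  have harg : |arg z| ≤ π / 2 := abs_arg_le_pi_div_two_iff.mpr hz.le
  -- Jordan's inequality for `φ = π/2 - |arg z|`, whose sine is `re z / ‖z‖`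
  have hjordan : 2 / π * (π / 2 - |arg z|) ≤ z.re / ‖z‖ := by
    rw [← cos_arg hz0, ← Real.cos_abs, ← Real.sin_pi_div_two_sub]
    exact Real.mul_le_sin (by linarith) (by linarith [abs_nonneg (arg z)])
  have hφ : π / 2 - |arg z| ≤ π / 2 * (z.re / ‖z‖) := by
    calc _ = π / 2 * (2 / π * (π / 2 - |arg z|)) := by field_simp
      _ ≤ _ := by gcongr
  have him : |z.im| * (π / 2 - |arg z|) ≤ ‖z‖ * (π / 2 - |arg z|) :=
    mul_le_mul_of_nonneg_right (abs_im_le_norm z) (by linarith)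
  have hre : ‖z‖ * (π / 2 * (z.re / ‖z‖)) = π / 2 * z.re := by field_simp
  rw [im_mul_arg_eq_abs_mul_abs]
  nlinarith [mul_le_mul_of_nonneg_left hφ hnorm.le]

noncomputable def normalizedGamma (z : ℂ) : ℂ := Gamma z * z ^ (1 / 2 - z)

theorem norm_normalizedGamma {z : ℂ} (hz : z ≠ 0) :
    ‖normalizedGamma z‖ = ‖Gamma z‖ * ‖z‖ ^ (1 / 2 - z.re) * Real.exp (z.im * arg z) := by
  rw [normalizedGamma, norm_mul, norm_cpow_of_ne_zero hz, mul_assoc, div_eq_mul_inv,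
    ← Real.exp_neg]
  simp [mul_comm]

theorem differentiableAt_normalizedGamma {z : ℂ} (hz : 0 < z.re) :
    DifferentiableAt ℂ normalizedGamma z := by
  have hΓ : DifferentiableAt ℂ Gamma z := differentiableAt_Gamma z fun m hm ↦ by
    have := congrArg re hm
    simp only [neg_re, natCast_re] at this
    linarith [m.cast_nonneg (α := ℝ)]
  exact hΓ.mul (differentiableAt_id.cpow (by fun_prop) (Or.inl hz))

theorem norm_Gamma_one_half_add_mul_I_mul_exp_le {z : ℂ} (hz : 0 ≤ z.re) :
    ‖Gamma (1 / 2 + z.im * I)‖ * Real.exp (z.im * arg z) ≤ √(2 * π) :=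
  calc _ ≤ √(2 * π) * Real.exp (-(π / 2) * |z.im|) *
        Real.exp (π / 2 * |z.im|) :=
        mul_le_mul (norm_Gamma_one_half_add_mul_I_le _) (Real.exp_le_exp.mpr (im_mul_arg_le hz))
          (by positivity) (by positivity)
    _ = √(2 * π) := by rw [mul_assoc, ← Real.exp_add]; ring_nf; simp

theorem norm_normalizedGamma_le_of_re_eq_half {z : ℂ} (hz : z.re = 1 / 2) :
    ‖normalizedGamma z‖ ≤ √(2 * π) := by
  have hz0 : z ≠ 0 := fun h ↦ by norm_num [h] at hz
  have hz' : z = 1 / 2 + z.im * I := by apply Complex.ext <;> simp [hz]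
  have := norm_Gamma_one_half_add_mul_I_mul_exp_le (z := z) (by rw [hz]; norm_num)
  rw [← hz'] at this
  rwa [norm_normalizedGamma hz0, hz, sub_self, Real.rpow_zero, mul_one]

theorem norm_normalizedGamma_le_of_re_eq_three_half {z : ℂ} (hz : z.re = 3 / 2) :
    ‖normalizedGamma z‖ ≤ √(2 * π) := by
  have hz0 : z ≠ 0 := fun h ↦ by norm_num [h] at hz
  have hnorm : 0 < ‖z‖ := norm_pos_iff.mpr hz0
  set w : ℂ := 1 / 2 + z.im * I
  have hw0 : w ≠ 0 := fun h ↦ by simpa [w] using congrArg re h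
  have hzw : z = w + 1 := by apply Complex.ext <;> simp [w, hz]; norm_num
  have hw : ‖w‖ ≤ ‖z‖ := by
    rw [← sq_le_sq₀ (norm_nonneg _) (norm_nonneg _), Complex.sq_norm, Complex.sq_norm,
      normSq_apply, normSq_apply]
    simp [w, hz]; norm_num
  rw [norm_normalizedGamma hz0, hz, hzw, Gamma_add_one w hw0, ← hzw, norm_mul,
    show (1 : ℝ) / 2 - 3 / 2 = -1 by norm_num, Real.rpow_neg_one]
  calc ‖w‖ * ‖Gamma w‖ * ‖z‖⁻¹ * Real.exp (z.im * arg z)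
      ≤ ‖z‖ * ‖Gamma w‖ * ‖z‖⁻¹ * Real.exp (z.im * arg z) := by gcongr
    _ = ‖Gamma w‖ * Real.exp (z.im * arg z) := by field_simp
    _ ≤ √(2 * π) := norm_Gamma_one_half_add_mul_I_mul_exp_le (by rw [hz]; norm_num)

theorem norm_normalizedGamma_le_exp {z : ℂ} (h₁ : 1 / 2 ≤ z.re) (h₂ : z.re ≤ 3 / 2) :
    ‖normalizedGamma z‖ ≤
      2 * max (Real.Gamma (1 / 2)) (Real.Gamma (3 / 2)) * Real.exp (π / 2 * |z.im|) := by
  have hz0 : z ≠ 0 := fun h ↦ by norm_num [h] at h₁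
  have hnorm : 1 / 2 ≤ ‖z‖ := h₁.trans <| (le_abs_self _).trans (abs_re_le_norm z)
  have hpow : ‖z‖ ^ (1 / 2 - z.re) ≤ 2 :=
    calc ‖z‖ ^ (1 / 2 - z.re) ≤ (1 / 2 : ℝ) ^ (1 / 2 - z.re) :=
          Real.rpow_le_rpow_of_nonpos (by norm_num) hnorm (by linarith)
      _ ≤ (1 / 2 : ℝ) ^ (-1 : ℝ) := Real.rpow_le_rpow_of_exponent_ge (by norm_num) (by norm_num)
          (by linarith)
      _ = 2 := by norm_num
  rw [norm_normalizedGamma hz0, mul_comm 2]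
  gcongr ?_ * ?_ * Real.exp ?_
  · exact norm_Gamma_le_of_re_mem_Icc h₁ h₂
  · exact im_mul_arg_le (by linarith)

theorem norm_normalizedGamma_le {z : ℂ} (h₁ : 1 / 2 ≤ z.re) (h₂ : z.re ≤ 3 / 2) :
    ‖normalizedGamma z‖ ≤ √(2 * π) := by
  refine PhragmenLindelof.vertical_strip ?_ ?_
    (fun w hw ↦ norm_normalizedGamma_le_of_re_eq_half hw)
    (fun w hw ↦ norm_normalizedGamma_le_of_re_eq_three_half hw) h₁ h₂
  · refine DifferentiableOn.diffContOnCl fun w hw ↦ ?_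
    rw [closure_preimage_re, closure_Ioo (by norm_num)] at hw
    exact (differentiableAt_normalizedGamma (by linarith [hw.1])).differentiableWithinAt
  · refine ⟨1, by norm_num; linarith [Real.pi_gt_three], π / 2, ?_⟩
    refine Asymptotics.IsBigO.of_bound (2 * max (Real.Gamma (1 / 2)) (Real.Gamma (3 / 2))) ?_
    refine Filter.eventually_inf_principal.mpr (Filter.Eventually.of_forall fun w ⟨hw₁, hw₂⟩ ↦ ?_)
    refine (norm_normalizedGamma_le_exp hw₁.le hw₂.le).trans ?_
    rw [Real.norm_of_nonneg (Real.exp_pos _).le, one_mul]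
    gcongr
    linarith [Real.add_one_le_exp |w.im|]

/-- The size of `Γ(x + iy)` for large `|y|`, up to a constant depending on `x`. -/
-- `1 + 2|y|` rather than `1 + |y|`: at `y = (v ± μ) / 2` it is the weight `1 + |v ± μ|`.
noncomputable def stirlingMajorant (x y : ℝ) : ℝ :=
  Real.exp (-(π / 2) * |y|) * (1 + 2 * |y|) ^ (x - 1 / 2)

theorem stirlingMajorant_pos (x y : ℝ) : 0 < stirlingMajorant x y := by
  unfold stirlingMajorant; positivity

theorem stirlingMajorant_add_one (x y : ℝ) :
    stirlingMajorant (x + 1) y = (1 + 2 * |y|) * stirlingMajorant x y := by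
  rw [stirlingMajorant, stirlingMajorant, add_sub_right_comm,
    Real.rpow_add_one (by positivity : 1 + 2 * |y| ≠ 0)]
  ring

theorem norm_Gamma_le_stirlingMajorant_of_mem_Icc {x : ℝ} (y : ℝ) (h₁ : 1 / 2 ≤ x)
    (h₂ : x ≤ 3 / 2) :
    ‖Gamma (x + y * I)‖ ≤
      √(2 * π) * (3 / 2) * Real.exp (3 * π / 4) * stirlingMajorant x y := by
  set z : ℂ := x + y * I
  have hre : z.re = x := by simp [z]
  have him : z.im = y := by simp [z]
  have hz0 : z ≠ 0 := fun h ↦ by norm_num [← hre, h] at h₁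
  have hnorm : 0 < ‖z‖ := norm_pos_iff.mpr hz0
  have hΓ : ‖Gamma z‖ ≤ √(2 * π) * (‖z‖ ^ (x - 1 / 2) * Real.exp (-(y * arg z))) := by
    have hF := norm_normalizedGamma_le (z := z) (by rwa [hre]) (by rwa [hre])
    rw [norm_normalizedGamma hz0, hre, him, mul_assoc, ← le_div_iff₀ (by positivity)] at hF
    rwa [div_eq_mul_inv, mul_inv, ← Real.rpow_neg hnorm.le, neg_sub, ← Real.exp_neg] at hF
  have hpow : ‖z‖ ^ (x - 1 / 2) ≤ 3 / 2 * (1 + 2 * |y|) ^ (x - 1 / 2) :=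
    calc ‖z‖ ^ (x - 1 / 2) ≤ (3 / 2 * (1 + 2 * |y|)) ^ (x - 1 / 2) := by
          refine Real.rpow_le_rpow hnorm.le ?_ (by linarith)
          have := norm_le_abs_re_add_abs_im z
          rw [hre, him, abs_of_nonneg (by linarith)] at this
          linarith [abs_nonneg y]
      _ = (3 / 2) ^ (x - 1 / 2) * (1 + 2 * |y|) ^ (x - 1 / 2) :=
          Real.mul_rpow (by norm_num) (by positivity)
      _ ≤ 3 / 2 * (1 + 2 * |y|) ^ (x - 1 / 2) := by
          gcongr
          exact Real.rpow_le_self_of_one_le (by norm_num) (by linarith)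
  have harg : -(y * arg z) ≤ 3 * π / 4 + -(π / 2) * |y| := by
    have := le_im_mul_arg (z := z) (by linarith)
    rw [hre, him] at this
    nlinarith [Real.pi_pos]
  calc ‖Gamma z‖ ≤ √(2 * π) * (‖z‖ ^ (x - 1 / 2) * Real.exp (-(y * arg z))) := hΓ
    _ ≤ √(2 * π) * (3 / 2 * (1 + 2 * |y|) ^ (x - 1 / 2) *
        Real.exp (3 * π / 4 + -(π / 2) * |y|)) := by gcongr
    _ = _ := by rw [stirlingMajorant, Real.exp_add]; ring

theorem norm_Gamma_le_of_norm_Gamma_add_one_le {x y C : ℝ} (hy : 1 / 2 ≤ |y|) (hC : 0 ≤ C)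
    (h : ‖Gamma (↑(x + 1) + y * I)‖ ≤ C * stirlingMajorant (x + 1) y) :
    ‖Gamma (x + y * I)‖ ≤ 4 * C * stirlingMajorant x y := by
  set z : ℂ := x + y * I
  have hnorm : |y| ≤ ‖z‖ := by simpa [z] using abs_im_le_norm z
  have hz0 : z ≠ 0 := norm_pos_iff.mp (by linarith)
  rw [show (↑(x + 1) + y * I : ℂ) = z + 1 by push_cast; ring, Gamma_add_one z hz0, norm_mul,
    stirlingMajorant_add_one] at h
  refine le_of_mul_le_mul_left ?_ (by linarith : 0 < ‖z‖)
  calc ‖z‖ * ‖Gamma z‖ ≤ C * ((1 + 2 * |y|) * stirlingMajorant x y) := h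
    _ ≤ C * (4 * ‖z‖ * stirlingMajorant x y) := by
        gcongr; exacts [(stirlingMajorant_pos x y).le, by linarith]
    _ = ‖z‖ * (4 * C * stirlingMajorant x y) := by ring

theorem norm_Gamma_add_one_le {x y C : ℝ} (hx : 0 < x)
    (h : ‖Gamma (x + y * I)‖ ≤ C * stirlingMajorant x y) :
    ‖Gamma (↑(x + 1) + y * I)‖ ≤ (x + 1) * C * stirlingMajorant (x + 1) y := by
  set z : ℂ := x + y * I
  have hz0 : z ≠ 0 := fun h ↦ by simpa [z, hx.ne'] using congrArg re h
  have hnorm : ‖z‖ ≤ (x + 1) * (1 + 2 * |y|) := by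
    have : ‖z‖ ≤ x + |y| := by simpa [z, abs_of_pos hx] using norm_le_abs_re_add_abs_im z
    nlinarith [abs_nonneg y]
  rw [show (↑(x + 1) + y * I : ℂ) = z + 1 by push_cast; ring, Gamma_add_one z hz0, norm_mul,
    stirlingMajorant_add_one]
  calc ‖z‖ * ‖Gamma z‖ ≤ (x + 1) * (1 + 2 * |y|) * (C * stirlingMajorant x y) := by gcongr
    _ = _ := by ring

theorem exists_norm_Gamma_le_stirlingMajorant_of_mem_Icc (n : ℕ) :
    ∃ C, 0 < C ∧ ∀ x y : ℝ, 1 / 2 - n ≤ x → x ≤ 3 / 2 + n → 1 / 2 ≤ |y| →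
      ‖Gamma (x + y * I)‖ ≤ C * stirlingMajorant x y := by
  induction n with
  | zero =>
    exact ⟨_, by positivity, fun x y h₁ h₂ _ ↦
      norm_Gamma_le_stirlingMajorant_of_mem_Icc y (by simpa using h₁) (by simpa using h₂)⟩
  | succ n ih =>
    obtain ⟨C, hC, hΓ⟩ := ih
    refine ⟨(n + 4) * C, by positivity, fun x y h₁ h₂ hy ↦ ?_⟩
    push_cast at h₁ h₂
    have hM := (stirlingMajorant_pos x y).le
    rcases lt_or_ge x (1 / 2 - n) with hx | hx
    · have := norm_Gamma_le_of_norm_Gamma_add_one_le hy hC.le (hΓ (x + 1) y (by linarith)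
        (by linarith) hy)
      exact this.trans (by gcongr; linarith)
    rcases le_or_gt x (3 / 2 + n) with hx' | hx'
    · exact (hΓ x y hx hx' hy).trans (by gcongr; exact le_mul_of_one_le_left hC.le (by linarith))
    · have := norm_Gamma_add_one_le (by linarith) (hΓ (x - 1) y (by linarith) (by linarith) hy)
      rw [sub_add_cancel] at this
      exact this.trans (by gcongr; linarith)

theorem exists_norm_Gamma_le_stirlingMajorant (R : ℝ) :
    ∃ C, 0 < C ∧ ∀ x y : ℝ, |x| ≤ R → 1 / 2 ≤ |y| →
      ‖Gamma (x + y * I)‖ ≤ C * stirlingMajorant x y := by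
  obtain ⟨C, hC, hΓ⟩ := exists_norm_Gamma_le_stirlingMajorant_of_mem_Icc (⌈R⌉₊ + 1)
  refine ⟨C, hC, fun x y hx hy ↦ hΓ x y ?_ ?_ hy⟩ <;>
    · push_cast; linarith [abs_le.mp hx, Nat.le_ceil R]

theorem stirlingMajorant_mul_stirlingMajorant_mul_exp (u v μ : ℝ) :
    stirlingMajorant ((u - 1 / 2) / 2) ((v + μ) / 2) *
        stirlingMajorant ((u - 1 / 2) / 2) ((v - μ) / 2) * Real.exp |π * μ / 2| =
      Real.exp (-(π / 2) * max (|v| - |μ|) 0) *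
        (1 + |μ + v|) ^ (u / 2 - 3 / 4) * (1 + |μ - v|) ^ (u / 2 - 3 / 4) := by
  have hmax : max (|v| - |μ|) 0 = (|v + μ| + |v - μ|) / 2 - |μ| := by
    rw [abs_add_add_abs_sub, ← sub_self |μ|, max_sub_sub_right]; ring
  simp only [stirlingMajorant, abs_div, abs_mul, abs_two, abs_of_pos Real.pi_pos, hmax, add_comm μ,
    abs_sub_comm μ]
  rw [show (u - 1 / 2) / 2 - 1 / 2 = u / 2 - 3 / 4 by ring, mul_div_cancel₀ _ two_ne_zero,
    mul_div_cancel₀ _ two_ne_zero, show -(π / 2) * ((|v + μ| + |v - μ|) / 2 - |μ|) =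
      -(π / 2) * (|v + μ| / 2) + -(π / 2) * (|v - μ| / 2) + π * |μ| / 2 by ring,
    Real.exp_add, Real.exp_add]
  ring

end Complex

theorem stmt10_general (a : ℝ) :
    ∃ C : ℝ, 0 < C ∧
      ∀ u v μ : ℝ, |u| ≤ a → 1 ≤ |v + μ| → 1 ≤ |v - μ| →
        ‖Complex.Gamma (((u : ℂ) + (v : ℂ) * Complex.I - 1 / 2 + (μ : ℂ) * Complex.I) / 2)‖ *
            ‖Complex.Gamma (((u : ℂ) + (v : ℂ) * Complex.I - 1 / 2 - (μ : ℂ) * Complex.I) / 2)‖ *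
            Real.cosh (Real.pi * μ / 2) ≤
          C * Real.exp (-(Real.pi / 2) * max (|v| - |μ|) 0) *
            (1 + |μ + v|) ^ (u / 2 - 3 / 4) * (1 + |μ - v|) ^ (u / 2 - 3 / 4) := by
  obtain ⟨C, hC, hΓ⟩ := exists_norm_Gamma_le_stirlingMajorant (a + 1)
  refine ⟨C ^ 2, by positivity, fun u v μ hu hadd hsub ↦ ?_⟩
  set x := (u - 1 / 2) / 2 with hx_def
  have hx : |x| ≤ a + 1 := by rw [abs_le] at hu ⊢; constructor <;> linarith
  have hy_add : 1 / 2 ≤ |(v + μ) / 2| := by rw [abs_div, abs_two]; linarith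
  have hy_sub : 1 / 2 ≤ |(v - μ) / 2| := by rw [abs_div, abs_two]; linarith
  have hM_add := stirlingMajorant_pos x ((v + μ) / 2)
  have hM_sub := stirlingMajorant_pos x ((v - μ) / 2)
  rw [show ((u : ℂ) + v * I - 1 / 2 + μ * I) / 2 = x + ↑((v + μ) / 2) * I by
      push_cast [hx_def]; ring,
    show ((u : ℂ) + v * I - 1 / 2 - μ * I) / 2 = x + ↑((v - μ) / 2) * I by
      push_cast [hx_def]; ring]
  calc _ ≤ C * stirlingMajorant x ((v + μ) / 2) * (C * stirlingMajorant x ((v - μ) / 2)) *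
        Real.exp |Real.pi * μ / 2| := by
        gcongr
        exacts [hΓ _ _ hx hy_add, hΓ _ _ hx hy_sub, Real.cosh_le_exp_abs _]
    _ = C ^ 2 * (stirlingMajorant x ((v + μ) / 2) * stirlingMajorant x ((v - μ) / 2) *
        Real.exp |Real.pi * μ / 2|) := by ring
    _ = _ := by rw [stirlingMajorant_mul_stirlingMajorant_mul_exp]; ring

/-- Stirling-type bound for B(s,μ) = Γ((s−1/2+iμ)/2)·Γ((s−1/2−iμ)/2)·cosh(πμ/2). -/
theorem stmt10 (a : ℝ) (ha : 1 ≤ a) :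
    ∃ C : ℝ, 0 < C ∧
      ∀ u v μ : ℝ, |u| ≤ a → 1 ≤ |v + μ| → 1 ≤ |v - μ| →
        ‖Complex.Gamma (((u : ℂ) + (v : ℂ) * Complex.I - 1 / 2 + (μ : ℂ) * Complex.I) / 2)‖ *
            ‖Complex.Gamma (((u : ℂ) + (v : ℂ) * Complex.I - 1 / 2 - (μ : ℂ) * Complex.I) / 2)‖ *
            Real.cosh (Real.pi * μ / 2) ≤
          C * Real.exp (-(Real.pi / 2) * max (|v| - |μ|) 0) *
            (1 + |μ + v|) ^ (u / 2 - 3 / 4) * (1 + |μ - v|) ^ (u / 2 - 3 / 4) :=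
  stmt10_general a
end

section
/- Let s ∈ ℂ with Re(s) > 0, let a ∈ ℂ, and let z be a real number with z < 1. Then ∫_{1/2}^{1} t^{s/2 − 1}·(1 − t)^{s/2 − 1}·(1 − t·z)^{−a} dt = (2^{2−s}/s)·(1 − z/2)^{−a} + (2/s)·(s/2 − 1)·∫_{1/2}^{1} (1 − t)^{s/2}·t^{s/2 − 2}·(1 − t·z)^{−a} dt + (2·a·z/s)·∫_{1/2}^{1} (1 − t)^{s/2}·t^{s/2 − 1}·(1 − t·z)^{−a−1} dt. -/
open Complex Set MeasureTheory intervalIntegral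

theorem HasDerivAt.ofReal_cpow_const {f : ℝ → ℝ} {f' x : ℝ} (hf : HasDerivAt f f' x)
    (hx : 0 < f x) (w : ℂ) :
    HasDerivAt (fun t => (f t : ℂ) ^ w) (w * (f x : ℂ) ^ (w - 1) * f') x :=
  (hasStrictDerivAt_cpow_const (ofReal_mem_slitPlane.2 hx)).hasDerivAt.comp (h₂ := (· ^ w)) x
    hf.ofReal_comp

theorem ContinuousOn.ofReal_cpow_const {f : ℝ → ℝ} {s : Set ℝ} (hf : ContinuousOn f s) {w : ℂ}
    (h : ∀ x ∈ s, 0 < w.re ∨ f x ≠ 0) : ContinuousOn (fun t => (f t : ℂ) ^ w) s :=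
  fun x hx => (continuousAt_ofReal_cpow_const (f x) w (h x hx)).comp_continuousWithinAt
    (hf x hx)

theorem intervalIntegrable_ofReal_one_sub_cpow {w : ℂ} (hw : -1 < w.re) (a b : ℝ) :
    IntervalIntegrable (fun t : ℝ => ((1 - t : ℝ) : ℂ) ^ w) volume a b := by
  simpa using (intervalIntegrable_cpow' hw (a := 1 - a) (b := 1 - b)).comp_sub_left 1

theorem one_sub_mul_pos_of_le_one {t z : ℝ} (ht₀ : 0 ≤ t) (ht₁ : t ≤ 1) (hz : z < 1) :
    0 < 1 - t * z := by
  rcases le_or_gt z 0 with hz₀ | hz₀ <;> nlinarith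

section EulerIntegrand

variable {p q a : ℂ} {z : ℝ}

theorem hasDerivAt_one_sub_cpow_mul_cpow_mul_one_sub_mul_cpow {x : ℝ} (hx₀ : 0 < x) (hx₁ : x < 1)
    (hxz : 0 < 1 - x * z) :
    HasDerivAt (fun t : ℝ => ((1 - t : ℝ) : ℂ) ^ q * (t : ℂ) ^ (p - 1) *
        ((1 - t * z : ℝ) : ℂ) ^ (-a))
      (-q * ((x : ℂ) ^ (p - 1) * ((1 - x : ℝ) : ℂ) ^ (q - 1) * ((1 - x * z : ℝ) : ℂ) ^ (-a)) +
        (p - 1) * (((1 - x : ℝ) : ℂ) ^ q * (x : ℂ) ^ (p - 2) * ((1 - x * z : ℝ) : ℂ) ^ (-a)) +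
        a * z * (((1 - x : ℝ) : ℂ) ^ q * (x : ℂ) ^ (p - 1) *
          ((1 - x * z : ℝ) : ℂ) ^ (-a - 1))) x := by
  have hU := ((hasDerivAt_id' x).const_sub 1).ofReal_cpow_const (sub_pos.2 hx₁) q
  have hV := (hasDerivAt_id' x).ofReal_cpow_const hx₀ (p - 1)
  have hW := (((hasDerivAt_id' x).mul_const z).const_sub 1).ofReal_cpow_const hxz (-a)
  refine ((hU.mul hV).mul hW).congr_deriv ?_
  rw [Pi.mul_apply, show p - 1 - 1 = p - 2 by ring]
  push_cast
  ring

variable {c : ℝ}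

/-- Integration by parts against `(1 - t) ^ q * t ^ (p - 1) * (1 - t z) ^ (-a)`, which vanishes
at `t = 1` because `0 < re q`. -/
theorem mul_integral_cpow_mul_one_sub_cpow_mul_cpow (hq : 0 < q.re) (hz : z < 1) (hc₀ : 0 < c)
    (hc₁ : c ≤ 1) :
    q * (∫ t in c..1, (t : ℂ) ^ (p - 1) * ((1 - t : ℝ) : ℂ) ^ (q - 1) *
        ((1 - t * z : ℝ) : ℂ) ^ (-a)) =
      ((1 - c : ℝ) : ℂ) ^ q * (c : ℂ) ^ (p - 1) * ((1 - c * z : ℝ) : ℂ) ^ (-a) +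
        (p - 1) * (∫ t in c..1, ((1 - t : ℝ) : ℂ) ^ q * (t : ℂ) ^ (p - 2) *
          ((1 - t * z : ℝ) : ℂ) ^ (-a)) +
        a * z * (∫ t in c..1, ((1 - t : ℝ) : ℂ) ^ q * (t : ℂ) ^ (p - 1) *
          ((1 - t * z : ℝ) : ℂ) ^ (-a - 1)) := by
  have hpos : ∀ t ∈ Icc c 1, 0 < t ∧ 0 < 1 - t * z := fun t ht =>
    ⟨hc₀.trans_le ht.1, one_sub_mul_pos_of_le_one (hc₀.le.trans ht.1) ht.2 hz⟩
  have hcont_t (w : ℂ) : ContinuousOn (fun t : ℝ => (t : ℂ) ^ w) (Icc c 1) :=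
    continuousOn_id.ofReal_cpow_const fun t ht => Or.inr (hpos t ht).1.ne'
  have hcont_z (w : ℂ) : ContinuousOn (fun t : ℝ => ((1 - t * z : ℝ) : ℂ) ^ w) (Icc c 1) :=
    (continuousOn_const.sub (continuousOn_id.mul continuousOn_const)).ofReal_cpow_const
      fun t ht => Or.inr (hpos t ht).2.ne'
  have hcont_one_sub : ContinuousOn (fun t : ℝ => ((1 - t : ℝ) : ℂ) ^ q) (Icc c 1) :=
    (continuousOn_const.sub continuousOn_id).ofReal_cpow_const fun _ _ => Or.inl hq
  have hIcc : uIcc c 1 = Icc c 1 := uIcc_of_le hc₁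
  have hI₀ : IntervalIntegrable (fun t : ℝ => (t : ℂ) ^ (p - 1) * ((1 - t : ℝ) : ℂ) ^ (q - 1) *
      ((1 - t * z : ℝ) : ℂ) ^ (-a)) volume c 1 :=
    ((intervalIntegrable_ofReal_one_sub_cpow (by rw [sub_re, one_re]; linarith) c 1)
      |>.continuousOn_mul (hIcc ▸ hcont_t _)).mul_continuousOn (hIcc ▸ hcont_z _)
  have hI₁ : IntervalIntegrable (fun t : ℝ => ((1 - t : ℝ) : ℂ) ^ q * (t : ℂ) ^ (p - 2) *
      ((1 - t * z : ℝ) : ℂ) ^ (-a)) volume c 1 :=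
    (hIcc ▸ (hcont_one_sub.mul (hcont_t _)).mul (hcont_z _)).intervalIntegrable
  have hI₂ : IntervalIntegrable (fun t : ℝ => ((1 - t : ℝ) : ℂ) ^ q * (t : ℂ) ^ (p - 1) *
      ((1 - t * z : ℝ) : ℂ) ^ (-a - 1)) volume c 1 :=
    (hIcc ▸ (hcont_one_sub.mul (hcont_t _)).mul (hcont_z _)).intervalIntegrable
  have hFTC := integral_eq_sub_of_hasDerivAt_of_le hc₁
    ((hcont_one_sub.mul (hcont_t _)).mul (hcont_z _))
    (fun x hx => hasDerivAt_one_sub_cpow_mul_cpow_mul_one_sub_mul_cpow (hc₀.trans hx.1) hx.2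
      (hpos x (Ioo_subset_Icc_self hx)).2)
    (((hI₀.const_mul (-q)).add (hI₁.const_mul _)).add (hI₂.const_mul _))
  rw [integral_add ((hI₀.const_mul (-q)).add (hI₁.const_mul _)) (hI₂.const_mul _),
    integral_add (hI₀.const_mul (-q)) (hI₁.const_mul _), intervalIntegral.integral_const_mul,
    intervalIntegral.integral_const_mul, intervalIntegral.integral_const_mul] at hFTC
  simp only [Pi.mul_apply, sub_self, ofReal_zero, zero_cpow (ne_zero_of_re_pos hq), zero_mul,
    zero_sub] at hFTC
  linear_combination -hFTC

end EulerIntegrand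

theorem ofReal_half_cpow (w : ℂ) : ((1 / 2 : ℝ) : ℂ) ^ w = 2 ^ (-w) := by
  rw [cpow_neg, ← inv_cpow _ _ (by simp [Real.pi_ne_zero.symm])]
  norm_num

/-- Integration-by-parts identity for the Euler-type integral of the hypergeometric
function (Section 4.3 of the paper). -/
theorem stmt11 (s : ℂ) (hs : 0 < s.re) (a : ℂ) (z : ℝ) (hz : z < 1) :
    (∫ t in (1 / 2 : ℝ)..1, (t : ℂ) ^ (s / 2 - 1) * ((1 - t : ℝ) : ℂ) ^ (s / 2 - 1) *
        ((1 - t * z : ℝ) : ℂ) ^ (-a)) =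
      (2 : ℂ) ^ (2 - s) / s * ((1 - z / 2 : ℝ) : ℂ) ^ (-a) +
        2 / s * (s / 2 - 1) *
          (∫ t in (1 / 2 : ℝ)..1, ((1 - t : ℝ) : ℂ) ^ (s / 2) * (t : ℂ) ^ (s / 2 - 2) *
            ((1 - t * z : ℝ) : ℂ) ^ (-a)) +
        2 * a * (z : ℂ) / s *
          (∫ t in (1 / 2 : ℝ)..1, ((1 - t : ℝ) : ℂ) ^ (s / 2) * (t : ℂ) ^ (s / 2 - 1) *
            ((1 - t * z : ℝ) : ℂ) ^ (-a - 1)) := by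
  have h := mul_integral_cpow_mul_one_sub_cpow_mul_cpow (p := s / 2) (q := s / 2) (a := a)
    (by simpa using hs) hz (c := 1 / 2) (by norm_num) (by norm_num)
  have hboundary : (2 : ℂ) ^ (2 - s) = 2 * (2 ^ (-(s / 2)) * 2 ^ (-(s / 2 - 1))) := by
    rw [← cpow_add _ _ two_ne_zero, show 2 - s = 1 + (-(s / 2) + -(s / 2 - 1)) by ring,
      cpow_add _ _ two_ne_zero, cpow_one]
  rw [show (1 - 1 / 2 : ℝ) = 1 / 2 by norm_num, show (1 - 1 / 2 * z : ℝ) = 1 - z / 2 by ring,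
    ofReal_half_cpow, ofReal_half_cpow] at h
  have hs₀ : s ≠ 0 := ne_zero_of_re_pos hs
  rw [hboundary]
  linear_combination (2 / s) * h - (∫ t in (1 / 2 : ℝ)..1, (t : ℂ) ^ (s / 2 - 1) *
    ((1 - t : ℝ) : ℂ) ^ (s / 2 - 1) * ((1 - t * z : ℝ) : ℂ) ^ (-a)) * mul_inv_cancel₀ hs₀
end
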